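/- arXiv:1910.01766 — 3 statements merged into one kernel-verified Lean document; each statement's English description precedes it below -/
import Mathlib

section
/- Let B be a unital ring, J a two-sided ideal of B, and p, q ∈ B idempotents with p − q ∈ J. With Z = Z(q) and D₀(p,q) = Z⁻¹ · diag(p, 1−q, 0, 0) · Z as in the difference construction, every entry of the matrix D₀(p,q) − diag(1,0,0,0) lies in J. -/
set_option maxHeartbeats 1000000 in
theorem mul_fin_four' {α : Type*} [NonUnitalNonAssocSemiring α]
    (a₁₁ a₁₂ a₁₃ a₁₄ a₂₁ a₂₂ a₂₃ a₂₄ a₃₁ a₃₂ a₃₃ a₃₄ a₄₁ a₄₂ a₄₃ a₄₄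
     b₁₁ b₁₂ b₁₃ b₁₄ b₂₁ b₂₂ b₂₃ b₂₄ b₃₁ b₃₂ b₃₃ b₃₄ b₄₁ b₄₂ b₄₃ b₄₄ : α) :
    !![a₁₁, a₁₂, a₁₃, a₁₄; a₂₁, a₂₂, a₂₃, a₂₄; a₃₁, a₃₂, a₃₃, a₃₄; a₄₁, a₄₂, a₄₃, a₄₄] *
    !![b₁₁, b₁₂, b₁₃, b₁₄; b₂₁, b₂₂, b₂₃, b₂₄; b₃₁, b₃₂, b₃₃, b₃₄; b₄₁, b₄₂, b₄₃, b₄₄] =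
    !![a₁₁*b₁₁ + a₁₂*b₂₁ + a₁₃*b₃₁ + a₁₄*b₄₁, a₁₁*b₁₂ + a₁₂*b₂₂ + a₁₃*b₃₂ + a₁₄*b₄₂,
       a₁₁*b₁₃ + a₁₂*b₂₃ + a₁₃*b₃₃ + a₁₄*b₄₃, a₁₁*b₁₄ + a₁₂*b₂₄ + a₁₃*b₃₄ + a₁₄*b₄₄;
       a₂₁*b₁₁ + a₂₂*b₂₁ + a₂₃*b₃₁ + a₂₄*b₄₁, a₂₁*b₁₂ + a₂₂*b₂₂ + a₂₃*b₃₂ + a₂₄*b₄₂,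
       a₂₁*b₁₃ + a₂₂*b₂₃ + a₂₃*b₃₃ + a₂₄*b₄₃, a₂₁*b₁₄ + a₂₂*b₂₄ + a₂₃*b₃₄ + a₂₄*b₄₄;
       a₃₁*b₁₁ + a₃₂*b₂₁ + a₃₃*b₃₁ + a₃₄*b₄₁, a₃₁*b₁₂ + a₃₂*b₂₂ + a₃₃*b₃₂ + a₃₄*b₄₂,
       a₃₁*b₁₃ + a₃₂*b₂₃ + a₃₃*b₃₃ + a₃₄*b₄₃, a₃₁*b₁₄ + a₃₂*b₂₄ + a₃₃*b₃₄ + a₃₄*b₄₄;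
       a₄₁*b₁₁ + a₄₂*b₂₁ + a₄₃*b₃₁ + a₄₄*b₄₁, a₄₁*b₁₂ + a₄₂*b₂₂ + a₄₃*b₃₂ + a₄₄*b₄₂,
       a₄₁*b₁₃ + a₄₂*b₂₃ + a₄₃*b₃₃ + a₄₄*b₄₃, a₄₁*b₁₄ + a₄₂*b₂₄ + a₄₃*b₃₄ + a₄₄*b₄₄] := by
  ext i j
  fin_cases i <;> fin_cases j
    <;> simp [Matrix.mul_apply, Fin.sum_univ_succ, ← add_assoc]

set_option maxHeartbeats 4000000 in
theorem difference_construction_mod_ideal {B : Type*} [Ring B] (J : TwoSidedIdeal B)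
    (p q : B) (hp : p * p = p) (hq : q * q = q) (hpq : p - q ∈ J) :
    let Z : Matrix (Fin 4) (Fin 4) B :=
      !![q, 0, 1 - q, 0; 1 - q, 0, 0, q; 0, 0, q, 1 - q; 0, 1, 0, 0]
    let Zinv : Matrix (Fin 4) (Fin 4) B :=
      !![q, 1 - q, 0, 0; 0, 0, 0, 1; 1 - q, 0, q, 0; 0, q, 1 - q, 0]
    let D := Zinv * !![p, 0, 0, 0; 0, 1 - q, 0, 0; 0, 0, 0, 0; 0, 0, 0, 0] * Z
    let p₁ : Matrix (Fin 4) (Fin 4) B := !![1, 0, 0, 0; 0, 0, 0, 0; 0, 0, 0, 0; 0, 0, 0, 0]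
    ∀ i j, (D - p₁) i j ∈ J := by
  intro Z Zinv D p₁ i j
  have key : ∀ x : B, J.ringCon.mk' x = 0 → x ∈ J := by
    intro x h
    rw [TwoSidedIdeal.mem_iff]
    exact J.ringCon.eq.mp h
  have hpq' : J.ringCon.mk' p = J.ringCon.mk' q := by
    rw [TwoSidedIdeal.mem_iff] at hpq
    have h0 : J.ringCon.mk' (p - q) = J.ringCon.mk' 0 := J.ringCon.eq.mpr hpq
    rw [map_sub, map_zero, sub_eq_zero] at h0
    exact h0
  have hq' : J.ringCon.mk' q * J.ringCon.mk' q = J.ringCon.mk' q := by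
    rw [← map_mul, hq]
  have hD : D = Zinv * !![p, 0, 0, 0; 0, 1 - q, 0, 0; 0, 0, 0, 0; 0, 0, 0, 0] * Z := rfl
  rw [mul_fin_four', mul_fin_four'] at hD
  rw [hD]
  fin_cases i <;> fin_cases j <;>
  · show _ ∈ J
    simp only [p₁, Fin.zero_eta, Fin.mk_one, Fin.reduceFinMk, Matrix.sub_apply,
      Matrix.of_apply, Matrix.cons_val', Matrix.cons_val_zero, Matrix.cons_val_one,
      Matrix.head_cons, Matrix.empty_val', Matrix.cons_val_fin_one, Matrix.head_fin_const,
      Matrix.cons_val_two, Matrix.tail_cons, Matrix.cons_val_three,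
      zero_mul, mul_zero, add_zero, zero_add, one_mul, mul_one, sub_zero, zero_sub]
    apply key
    simp only [map_sub, map_add, map_mul, map_one, map_zero, map_neg, hpq']
    try
      generalize J.ringCon.mk' q = a at hq'
      have ha : ∀ x, a * (a * x) = a * x := fun x => by rw [← mul_assoc, hq']
      try noncomm_ring
      try simp [hq', ha, pow_succ, mul_assoc]
      try (simp only [two_mul]; abel)
end

section
/- Let A be a unital Banach algebra and for a ∈ A define W(a) = [[1,a],[0,1]]·[[1,0],[a,1]]·[[1,a],[0,1]]·[[0,−1],[1,0]] ∈ M₂(A). Then W(a) is invertible for every a ∈ A, and there exists a constant C > 0 (independent of A) such that for all a, b ∈ A with ‖a‖ ≤ 1 and ‖b‖ ≤ 1, the idempotents b(a) = W(a)·[[1,0],[0,0]]·W(a)⁻¹ and b(b) = W(b)·[[1,0],[0,0]]·W(b)⁻¹ satisfy ‖b(a) − b(b)‖ ≤ C·‖a − b‖. -/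
attribute [local instance] Matrix.linftyOpNormedRing

private def Wm {A : Type*} [Ring A] (a : A) : Matrix (Fin 2) (Fin 2) A :=
  !![2*a+a^3, -(1+a^2); 1+a^2, -a]

private def Vm {A : Type*} [Ring A] (a : A) : Matrix (Fin 2) (Fin 2) A :=
  !![-a, 1+a^2; -(1+a^2), 2*a+a^3]

private lemma hW_eq {A : Type*} [Ring A] (a : A) :
    (!![1, a; 0, 1] * !![1, 0; a, 1] * !![1, a; 0, 1] * !![0, -1; 1, 0] :
      Matrix (Fin 2) (Fin 2) A) = Wm a := by
  ext i j
  fin_cases i <;> fin_cases j <;>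
    simp [Wm, Matrix.mul_apply, Fin.sum_univ_two] <;> noncomm_ring

private lemma hWV {A : Type*} [Ring A] (a : A) : Wm a * Vm a = 1 := by
  ext i j
  fin_cases i <;> fin_cases j <;>
    simp [Wm, Vm, Matrix.mul_apply, Matrix.one_apply, Fin.sum_univ_two] <;> noncomm_ring

private lemma hVW {A : Type*} [Ring A] (a : A) : Vm a * Wm a = 1 := by
  ext i j
  fin_cases i <;> fin_cases j <;>
    simp [Wm, Vm, Matrix.mul_apply, Matrix.one_apply, Fin.sum_univ_two] <;> noncomm_ring

private lemma norm2x2_le {A : Type*} [NormedRing A] (M : Matrix (Fin 2) (Fin 2) A) {c : ℝ}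
    (h0 : ‖M 0 0‖ + ‖M 0 1‖ ≤ c) (h1 : ‖M 1 0‖ + ‖M 1 1‖ ≤ c) : ‖M‖ ≤ c := by
  have hc : 0 ≤ c := le_trans (by positivity) h0
  rw [Matrix.linfty_opNorm_def]
  have h : (Finset.univ.sup fun i => ∑ j : Fin 2, ‖M i j‖₊) ≤ (⟨c, hc⟩ : NNReal) := by
    apply Finset.sup_le
    intro i _
    fin_cases i <;>
    · refine NNReal.coe_le_coe.mp ?_
      push_cast [Fin.sum_univ_two]
      simpa using ‹_›
  exact_mod_cast h

private lemma sq_diff_le {A : Type*} [NormedRing A] (a b : A) (ha : ‖a‖ ≤ 1) (hb : ‖b‖ ≤ 1) :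
    ‖a^2 - b^2‖ ≤ 2 * ‖a - b‖ := by
  have h : a^2 - b^2 = a * (a - b) + (a - b) * b := by noncomm_ring
  have h1 : ‖a * (a - b)‖ ≤ ‖a‖ * ‖a - b‖ := norm_mul_le _ _
  have h2 : ‖(a - b) * b‖ ≤ ‖a - b‖ * ‖b‖ := norm_mul_le _ _
  have hd : (0:ℝ) ≤ ‖a - b‖ := norm_nonneg _
  have h1' : ‖a‖ * ‖a - b‖ ≤ 1 * ‖a - b‖ := mul_le_mul_of_nonneg_right ha hd
  have h2' : ‖a - b‖ * ‖b‖ ≤ ‖a - b‖ * 1 := mul_le_mul_of_nonneg_left hb hd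
  calc ‖a^2 - b^2‖ ≤ ‖a * (a - b)‖ + ‖(a - b) * b‖ := h ▸ norm_add_le _ _
    _ ≤ 2 * ‖a - b‖ := by linarith

private lemma cube_diff_le {A : Type*} [NormedRing A] (a b : A) (ha : ‖a‖ ≤ 1) (hb : ‖b‖ ≤ 1) :
    ‖a^3 - b^3‖ ≤ 3 * ‖a - b‖ := by
  have h : a^3 - b^3 = a * (a^2 - b^2) + (a - b) * b^2 := by noncomm_ring
  have hd : (0:ℝ) ≤ ‖a - b‖ := norm_nonneg _
  have hsq := sq_diff_le a b ha hb
  have hb2 : ‖b^2‖ ≤ 1 := by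
    calc ‖b^2‖ ≤ ‖b‖^2 := norm_pow_le' b (by norm_num)
      _ ≤ 1 := pow_le_one₀ (norm_nonneg b) hb
  have h1 : ‖a * (a^2 - b^2)‖ ≤ 1 * (2 * ‖a - b‖) := by
    calc ‖a * (a^2 - b^2)‖ ≤ ‖a‖ * ‖a^2 - b^2‖ := norm_mul_le _ _
      _ ≤ 1 * (2 * ‖a - b‖) :=
        mul_le_mul ha hsq (norm_nonneg _) zero_le_one
  have h2 : ‖(a - b) * b^2‖ ≤ ‖a - b‖ * 1 := by
    calc ‖(a - b) * b^2‖ ≤ ‖a - b‖ * ‖b^2‖ := norm_mul_le _ _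
      _ ≤ ‖a - b‖ * 1 := mul_le_mul_of_nonneg_left hb2 hd
  calc ‖a^3 - b^3‖ ≤ ‖a * (a^2 - b^2)‖ + ‖(a - b) * b^2‖ := h ▸ norm_add_le _ _
    _ ≤ 3 * ‖a - b‖ := by linarith

private lemma norm_one_add_sq_le {A : Type*} [NormedRing A] [NormOneClass A] (c : A)
    (hc : ‖c‖ ≤ 1) : ‖(1:A) + c^2‖ ≤ 2 := by
  calc ‖(1:A)+c^2‖ ≤ ‖(1:A)‖ + ‖c^2‖ := norm_add_le _ _
    _ ≤ 1 + 1 := by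
        gcongr
        · simp
        · calc ‖c^2‖ ≤ ‖c‖^2 := norm_pow_le' c (by norm_num)
            _ ≤ 1 := pow_le_one₀ (norm_nonneg c) hc
    _ = 2 := by norm_num

private lemma norm_cubic_le {A : Type*} [NormedRing A] (c : A)
    (hc : ‖c‖ ≤ 1) : ‖2*c+c^3‖ ≤ 3 := by
  calc ‖2*c+c^3‖ ≤ ‖2*c‖ + ‖c^3‖ := norm_add_le _ _
    _ ≤ 2 + 1 := by
        gcongr
        · calc ‖2*c‖ = ‖c+c‖ := by rw [two_mul]
            _ ≤ ‖c‖ + ‖c‖ := norm_add_le _ _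
            _ ≤ 2 := by linarith
        · calc ‖c^3‖ ≤ ‖c‖^3 := norm_pow_le' c (by norm_num)
            _ ≤ 1 := pow_le_one₀ (norm_nonneg c) hc
    _ = 3 := by norm_num

private lemma norm_Wm_le {A : Type*} [NormedRing A] [NormOneClass A] (c : A)
    (hc : ‖c‖ ≤ 1) : ‖Wm c‖ ≤ 5 := by
  have h1 := norm_one_add_sq_le c hc
  have h2 := norm_cubic_le c hc
  apply norm2x2_le
  · show ‖(2*c+c^3 : A)‖ + ‖(-(1+c^2) : A)‖ ≤ 5
    rw [norm_neg]; linarith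
  · show ‖((1+c^2) : A)‖ + ‖(-c : A)‖ ≤ 5
    rw [norm_neg]; linarith

private lemma norm_Vm_le {A : Type*} [NormedRing A] [NormOneClass A] (c : A)
    (hc : ‖c‖ ≤ 1) : ‖Vm c‖ ≤ 5 := by
  have h1 := norm_one_add_sq_le c hc
  have h2 := norm_cubic_le c hc
  apply norm2x2_le
  · show ‖(-c : A)‖ + ‖((1+c^2) : A)‖ ≤ 5
    rw [norm_neg]; linarith
  · show ‖(-(1+c^2) : A)‖ + ‖(2*c+c^3 : A)‖ ≤ 5
    rw [norm_neg]; linarith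

private lemma norm_Wm_sub_le {A : Type*} [NormedRing A] (a b : A)
    (ha : ‖a‖ ≤ 1) (hb : ‖b‖ ≤ 1) : ‖Wm a - Wm b‖ ≤ 7 * ‖a - b‖ := by
  have hd : (0:ℝ) ≤ ‖a - b‖ := norm_nonneg _
  have hsq := sq_diff_le a b ha hb
  have hcube := cube_diff_le a b ha hb
  have h2ab : ‖2*a - 2*b‖ ≤ 2 * ‖a - b‖ := by
    have e : 2*a - 2*b = (a-b) + (a-b) := by noncomm_ring
    rw [e]
    calc ‖(a-b)+(a-b)‖ ≤ ‖a-b‖ + ‖a-b‖ := norm_add_le _ _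
      _ = 2 * ‖a-b‖ := (two_mul _).symm
  apply norm2x2_le <;> rw [Matrix.sub_apply, Matrix.sub_apply]
  · show ‖(2*a+a^3) - (2*b+b^3)‖ + ‖-(1+a^2) - -(1+b^2)‖ ≤ 7 * ‖a - b‖
    have e1 : (2*a+a^3) - (2*b+b^3) = (2*a - 2*b) + (a^3 - b^3) := by noncomm_ring
    have e2 : -(1+a^2) - -(1+b^2) = -(a^2 - b^2) := by noncomm_ring
    rw [e1, e2, norm_neg]
    calc ‖(2*a-2*b)+(a^3-b^3)‖ + ‖a^2-b^2‖
        ≤ (‖2*a-2*b‖ + ‖a^3-b^3‖) + ‖a^2-b^2‖ := by gcongr; exact norm_add_le _ _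
      _ ≤ 7 * ‖a-b‖ := by linarith
  · show ‖(1+a^2) - (1+b^2)‖ + ‖-a - -b‖ ≤ 7 * ‖a - b‖
    have e3 : (1+a^2) - (1+b^2) = a^2 - b^2 := by noncomm_ring
    have e4 : -a - -b = -(a - b) := by noncomm_ring
    rw [e3, e4, norm_neg]
    linarith

private lemma norm_Vm_sub_le {A : Type*} [NormedRing A] (a b : A)
    (ha : ‖a‖ ≤ 1) (hb : ‖b‖ ≤ 1) : ‖Vm a - Vm b‖ ≤ 7 * ‖a - b‖ := by
  have hd : (0:ℝ) ≤ ‖a - b‖ := norm_nonneg _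
  have hsq := sq_diff_le a b ha hb
  have hcube := cube_diff_le a b ha hb
  have h2ab : ‖2*a - 2*b‖ ≤ 2 * ‖a - b‖ := by
    have e : 2*a - 2*b = (a-b) + (a-b) := by noncomm_ring
    rw [e]
    calc ‖(a-b)+(a-b)‖ ≤ ‖a-b‖ + ‖a-b‖ := norm_add_le _ _
      _ = 2 * ‖a-b‖ := (two_mul _).symm
  apply norm2x2_le <;> rw [Matrix.sub_apply, Matrix.sub_apply]
  · show ‖-a - -b‖ + ‖(1+a^2) - (1+b^2)‖ ≤ 7 * ‖a - b‖
    have e3 : (1+a^2) - (1+b^2) = a^2 - b^2 := by noncomm_ring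
    have e4 : -a - -b = -(a - b) := by noncomm_ring
    rw [e3, e4, norm_neg]
    linarith
  · show ‖-(1+a^2) - -(1+b^2)‖ + ‖(2*a+a^3) - (2*b+b^3)‖ ≤ 7 * ‖a - b‖
    have e1 : (2*a+a^3) - (2*b+b^3) = (2*a - 2*b) + (a^3 - b^3) := by noncomm_ring
    have e2 : -(1+a^2) - -(1+b^2) = -(a^2 - b^2) := by noncomm_ring
    rw [e1, e2, norm_neg]
    calc ‖a^2-b^2‖ + ‖(2*a-2*b)+(a^3-b^3)‖
        ≤ ‖a^2-b^2‖ + (‖2*a-2*b‖ + ‖a^3-b^3‖) := by gcongr; exact norm_add_le _ _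
      _ ≤ 7 * ‖a-b‖ := by linarith

theorem bott_generators_lipschitz {A : Type*} [NormedRing A] [NormOneClass A]
    [CompleteSpace A] :
    (∀ a : A, IsUnit (!![1, a; 0, 1] * !![1, 0; a, 1] * !![1, a; 0, 1] * !![0, -1; 1, 0] :
      Matrix (Fin 2) (Fin 2) A)) ∧
    ∃ C : ℝ, 0 < C ∧ ∀ a b : A, ‖a‖ ≤ 1 → ‖b‖ ≤ 1 →
      ‖(!![1, a; 0, 1] * !![1, 0; a, 1] * !![1, a; 0, 1] * !![0, -1; 1, 0]) *
          !![1, 0; 0, 0] *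
          Ring.inverse (!![1, a; 0, 1] * !![1, 0; a, 1] * !![1, a; 0, 1] * !![0, -1; 1, 0]) -
        (!![1, b; 0, 1] * !![1, 0; b, 1] * !![1, b; 0, 1] * !![0, -1; 1, 0]) *
          !![1, 0; 0, 0] *
          Ring.inverse (!![1, b; 0, 1] * !![1, 0; b, 1] * !![1, b; 0, 1] * !![0, -1; 1, 0])‖
        ≤ C * ‖a - b‖ := by
  have hUnit : ∀ a : A, IsUnit (Wm a) := fun a =>
    (⟨Wm a, Vm a, hWV a, hVW a⟩ : (Matrix (Fin 2) (Fin 2) A)ˣ).isUnit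
  have hInv : ∀ a : A, Ring.inverse (Wm a) = Vm a := by
    intro a
    have h := Ring.inverse_unit (⟨Wm a, Vm a, hWV a, hVW a⟩ : (Matrix (Fin 2) (Fin 2) A)ˣ)
    simpa using h
  refine ⟨fun a => (hW_eq a) ▸ hUnit a, 70, by norm_num, fun a b ha hb => ?_⟩
  rw [hW_eq a, hW_eq b, hInv a, hInv b]
  set E : Matrix (Fin 2) (Fin 2) A := !![1, 0; 0, 0] with hEdef
  have hE : ‖E‖ ≤ 1 := by
    apply norm2x2_le <;> simp [hEdef]
  have hd : (0:ℝ) ≤ ‖a - b‖ := norm_nonneg _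
  have bWb := norm_Wm_le b hb
  have bVa := norm_Vm_le a ha
  have hdW := norm_Wm_sub_le a b ha hb
  have hdV := norm_Vm_sub_le a b ha hb
  have key : Wm a * E * Vm a - Wm b * E * Vm b
      = (Wm a - Wm b) * E * Vm a + Wm b * E * (Vm a - Vm b) := by noncomm_ring
  have t1 : ‖(Wm a - Wm b) * E * Vm a‖ ≤ 7 * ‖a-b‖ * 1 * 5 := by
    calc ‖(Wm a - Wm b) * E * Vm a‖ ≤ ‖(Wm a - Wm b) * E‖ * ‖Vm a‖ := norm_mul_le _ _
      _ ≤ ‖Wm a - Wm b‖ * ‖E‖ * ‖Vm a‖ := by gcongr; exact norm_mul_le _ _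
      _ ≤ 7 * ‖a-b‖ * 1 * 5 := by
          gcongr <;> first | exact hdW | exact hE | exact bVa
  have t2 : ‖Wm b * E * (Vm a - Vm b)‖ ≤ 5 * 1 * (7 * ‖a-b‖) := by
    calc ‖Wm b * E * (Vm a - Vm b)‖ ≤ ‖Wm b * E‖ * ‖Vm a - Vm b‖ := norm_mul_le _ _
      _ ≤ ‖Wm b‖ * ‖E‖ * ‖Vm a - Vm b‖ := by gcongr; exact norm_mul_le _ _
      _ ≤ 5 * 1 * (7 * ‖a-b‖) := by
          gcongr <;> first | exact bWb | exact hE | exact hdV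
  calc ‖Wm a * E * Vm a - Wm b * E * Vm b‖
      ≤ ‖(Wm a - Wm b) * E * Vm a‖ + ‖Wm b * E * (Vm a - Vm b)‖ := key ▸ norm_add_le _ _
    _ ≤ 70 * ‖a - b‖ := by linarith
end

section
/- Let X be a metric space and A, B ⊆ X closed subsets with X = A ∪ B forming a w-excisive decomposition: for each R > 0 there is S > 0 with Pen(A;R) ∩ Pen(B;R) ⊆ Pen(A∩B;S). Let T_A and T_B be kernels Z × Z → ℂ (Z a countable dense subset of X) with finite propagation R' and R'' respectively, such that T_A is supported in Pen(A;R')×Pen(A;R') and T_B is supported in Pen(B;R'')×Pen(B;R''). Then there exists S > 0 such that the product kernel (T_A T_B)(x,y) = Σ_z T_A(x,z) T_B(z,y) is supported in Pen(A∩B;S) × Pen(A∩B;S). -/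
open Metric

theorem excisive_product_support {X : Type*} [MetricSpace X] (A B : Set X)
    (hA : IsClosed A) (hB : IsClosed B) (hcover : A ∪ B = Set.univ)
    (Z : Set X) (hZc : Z.Countable) (hZd : Dense Z)
    (hexc : ∀ R > (0 : ℝ), ∃ S > (0 : ℝ),
      {x : X | infDist x A ≤ R} ∩ {x : X | infDist x B ≤ R} ⊆
        {x : X | infDist x (A ∩ B) ≤ S})
    (TA TB : Z → Z → ℂ) (RA RB : ℝ) (hRA : 0 < RA) (hRB : 0 < RB)
    (hTA : ∀ x y : Z, TA x y ≠ 0 →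
      dist (x : X) (y : X) ≤ RA ∧ infDist (x : X) A ≤ RA ∧ infDist (y : X) A ≤ RA)
    (hTB : ∀ x y : Z, TB x y ≠ 0 →
      dist (x : X) (y : X) ≤ RB ∧ infDist (x : X) B ≤ RB ∧ infDist (y : X) B ≤ RB) :
    ∃ S > (0 : ℝ), ∀ x y : Z, (∑' z : Z, TA x z * TB z y) ≠ 0 →
      infDist (x : X) (A ∩ B) ≤ S ∧ infDist (y : X) (A ∩ B) ≤ S := by
  set R := max RA RB with hR
  have hRpos : 0 < R := lt_of_lt_of_le hRA (le_max_left _ _)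
  obtain ⟨S0, hS0, hsub⟩ := hexc R hRpos
  refine ⟨S0 + RA + RB, by positivity, fun x y hsum => ?_⟩
  -- find z with nonzero terms
  have : ∃ z : Z, TA x z * TB z y ≠ 0 := by
    by_contra h
    push_neg at h
    exact hsum (by simp [h] <;> exact fun z => h z)
  obtain ⟨z, hz⟩ := this
  have hA' := hTA x z (fun h => hz (by simp [h]))
  have hB' := hTB z y (fun h => hz (by simp [h]))
  have hzmem : infDist (z : X) (A ∩ B) ≤ S0 :=
    hsub ⟨le_trans hA'.2.2 (le_max_left _ _), le_trans hB'.2.1 (le_max_right _ _)⟩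
  constructor
  · calc infDist (x : X) (A ∩ B) ≤ infDist (z : X) (A ∩ B) + dist (x : X) (z : X) :=
          infDist_le_infDist_add_dist
      _ ≤ S0 + RA := add_le_add hzmem hA'.1
      _ ≤ S0 + RA + RB := by linarith
  · calc infDist (y : X) (A ∩ B) ≤ infDist (z : X) (A ∩ B) + dist (y : X) (z : X) :=
          infDist_le_infDist_add_dist
      _ ≤ S0 + RB := add_le_add hzmem (by rw [dist_comm]; exact hB'.1)
      _ ≤ S0 + RA + RB := by linarith
end
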